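/- arXiv:1905.05723 — 2 statements merged into one kernel-verified Lean document; each statement's English description precedes it below -/
import Mathlib

section
/- In QH_α, the special case of the quantum Pieri formula for multiplication by c_m holds: for every partition λ ⊆ m×k, c_m · σ_λ = (α q)^{(m + |λ| − |λ↑1|)/n} · σ_{λ↑1}, where λ↑1 is the Seidel shift of λ. In particular the exponent (m + |λ| − |λ↑1|)/n is a nonnegative integer (equal to 0 if λ₁ < k and 1 if λ₁ = k). -/
/-!
The Jacobi–Trudi matrix `(σ_{λ_i+1+j-i})` of `λ+1` is that of `λ` shifted one column to the
left. Laplace expansion of the Toeplitz determinant defining `σ_p` gives the recursion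
`σ_p = ∑_t (-1)^t c_{t+1} σ_{p-1-t}`, which writes the new last column as a combination of the
old columns; after column operations only the first old column survives, with coefficient
`± c_m`, so `c_m σ_λ = σ_{λ+1}` already in `ℚ[c_1, …, c_m]`. This is the claim when `λ_1 < k`.
If `λ_1 = k`, the first row of the matrix of `λ+1` is `(σ_{k+1}, …, σ_{k+m})`; in `QH_α` all of
it vanishes except `σ_{m+k} = -(-1)^m α q`, and expanding along it leaves `α q` times the
Jacobi–Trudi determinant of `(λ_2, …, λ_m)`, which is `σ_{λ↑1}` because a trailing zero part
does not change `σ`.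
-/

/-- The sequence `c = (c_1, …, c_m, 0, 0, …)` of variables of `S = ℚ[c_1, …, c_m]`,
with `c_0 = 1` and `c_i = 0` for `i < 0` or `i > m`. -/
noncomputable def cVar (m : ℕ) : ℤ → MvPolynomial (Fin m) ℚ := fun i =>
  if h : 1 ≤ i ∧ i ≤ (m : ℤ) then MvPolynomial.X ⟨(i - 1).toNat, by omega⟩
  else if i = 0 then 1 else 0

/-- `σ_p = Δ_{(1^p)}(c) = det(c_{1+j-i})_{p×p}`, extended by `σ_p = 0` for `p < 0`. -/
noncomputable def sigmaP (m : ℕ) : ℤ → MvPolynomial (Fin m) ℚ := fun p =>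
  if p < 0 then 0
  else Matrix.det (Matrix.of fun i j : Fin p.toNat => cVar m (1 + (j : ℤ) - (i : ℤ)))

/-- `σ_λ = Δ_λ(σ) = det(σ_{λ_i+j-i})`. -/
noncomputable def sigmaL (m : ℕ) {l : ℕ} (lam : Fin l → ℕ) : MvPolynomial (Fin m) ℚ :=
  Matrix.det (Matrix.of fun i j : Fin l => sigmaP m ((lam i : ℤ) + (j : ℤ) - (i : ℤ)))

/-- The deformed quantum ring `QH_α = S[q]/⟨σ_{k+1}, …, σ_{n-1}, σ_n + (-1)^m α q⟩`
is the quotient of `Polynomial (MvPolynomial (Fin m) ℚ)` by this ideal. -/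
noncomputable def qhIdeal (m k : ℕ) (α : ℚ) :
    Ideal (Polynomial (MvPolynomial (Fin m) ℚ)) :=
  Ideal.span
    ((fun p : ℤ => Polynomial.C (sigmaP m p)) '' Set.Icc ((k : ℤ) + 1) ((m : ℤ) + k - 1) ∪
      {Polynomial.C (sigmaP m ((m : ℤ) + k)) +
        (-1) ^ m * Polynomial.C (MvPolynomial.C α) * Polynomial.X})

/-- The Seidel shift `λ↑1` of a partition `λ ⊆ m × k`. -/
def upShift (m k : ℕ) (hm : 0 < m) (lam : Fin m → ℕ) : Fin m → ℕ :=
  if lam ⟨0, hm⟩ < k then fun i => lam i + 1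
  else fun i => if h : (i : ℕ) + 1 < m then lam ⟨(i : ℕ) + 1, h⟩ else 0

namespace Matrix

variable {R : Type*} [CommRing R]

theorem det_succ_row_of_eq_zero {n : ℕ} (A : Matrix (Fin (n + 1)) (Fin (n + 1)) R)
    (i j : Fin (n + 1)) (h : ∀ j', j' ≠ j → A i j' = 0) :
    A.det = (-1) ^ (i + j : ℕ) * A i j * (A.submatrix i.succAbove j.succAbove).det := by
  rw [det_succ_row A i, Finset.sum_eq_single j (fun j' _ hj' => by rw [h j' hj', mul_zero,
    zero_mul]) (by simp)]

theorem det_succ_column_of_eq_zero {n : ℕ} (A : Matrix (Fin (n + 1)) (Fin (n + 1)) R)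
    (i j : Fin (n + 1)) (h : ∀ i', i' ≠ i → A i' j = 0) :
    A.det = (-1) ^ (i + j : ℕ) * A i j * (A.submatrix i.succAbove j.succAbove).det := by
  rw [det_succ_column A j, Finset.sum_eq_single i (fun i' _ hi' => by rw [h i' hi', mul_zero,
    zero_mul]) (by simp)]

theorem det_eq_of_col_rotate {n : ℕ} (A B : Matrix (Fin (n + 1)) (Fin (n + 1)) R)
    (d : Fin (n + 1) → R) (hshift : ∀ i (j : Fin n), B i j.castSucc = A i j.succ)
    (hlast : ∀ i, B i (Fin.last n) = ∑ j, d j * A i j) :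
    B.det = (-1) ^ n * d 0 * A.det := by
  set P := A.submatrix id (finRotate (n + 1))
  have hB : B = P.updateCol (Fin.last n) fun i => ∑ j, d (finRotate _ j) • P i j := by
    ext i j
    cases j using Fin.lastCases with
    | last =>
      rw [updateCol_self, hlast]
      exact (Equiv.sum_comp (finRotate _) fun j => d j * A i j).symm
    | cast j =>
      rw [updateCol_ne (Fin.castSucc_lt_last j).ne, hshift]
      simp [P, Fin.coeSucc_eq_succ]
  rw [hB, det_updateCol_sum, det_permute', sign_finRotate, finRotate_last, smul_eq_mul]
  push_cast
  ring

end Matrix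

section Toeplitz

variable {R : Type*} [CommRing R]

def elemToeplitz (c : ℤ → R) (p : ℕ) : Matrix (Fin p) (Fin p) R :=
  Matrix.of fun i j => c (1 + (j : ℤ) - (i : ℤ))

variable {c : ℤ → R}

theorem det_elemToeplitz_submatrix_succ_succAbove (hc₀ : c 0 = 1) (hc : ∀ i < 0, c i = 0)
    (p q : ℕ) (j : Fin (p + 1)) (hjq : (j : ℕ) + q = p) :
    ((elemToeplitz c (p + 1)).submatrix Fin.succ j.succAbove).det =
      (elemToeplitz c q).det := by
  induction p generalizing q with
  | zero =>
    obtain rfl : q = 0 := by omega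
    simp
  | succ p ih =>
    cases j using Fin.cases with
    | zero =>
      obtain rfl : q = p + 1 := by simpa using hjq
      congr 1
      ext i j
      simp only [elemToeplitz, Matrix.submatrix_apply, Fin.succAbove_zero, Matrix.of_apply,
        Fin.val_succ]
      push_cast
      ring_nf
    | succ j =>
      rw [Matrix.det_succ_column_of_eq_zero _ 0 0 fun i hi => hc _ (by
        simp [Fin.pos_iff_ne_zero.mpr hi]), ← ih q j (by simp at hjq; omega),
        Matrix.submatrix_submatrix]
      convert one_mul _ using 2
      · simp [elemToeplitz, hc₀]
      · ext a b
        simp only [elemToeplitz, Function.comp_apply, Matrix.submatrix_apply, Matrix.of_apply,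
          Fin.succAbove_zero, Fin.succ_succAbove_succ, Fin.val_succ]
        push_cast
        ring_nf

theorem det_elemToeplitz_succ (hc₀ : c 0 = 1) (hc : ∀ i < 0, c i = 0) (p : ℕ) :
    (elemToeplitz c (p + 1)).det =
      ∑ j : Fin (p + 1), (-1) ^ (j : ℕ) * c (1 + j) * (elemToeplitz c (p - j)).det := by
  rw [Matrix.det_succ_row_zero]
  refine Finset.sum_congr rfl fun j _ => ?_
  rw [det_elemToeplitz_submatrix_succ_succAbove hc₀ hc p (p - j) j (by omega)]
  simp [elemToeplitz]

end Toeplitz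

theorem cVar_zero (m : ℕ) : cVar m 0 = 1 := by simp [cVar]

theorem cVar_of_neg (m : ℕ) {i : ℤ} (h : i < 0) : cVar m i = 0 := by
  simp only [cVar]; rw [dif_neg (by omega), if_neg (by omega)]

theorem cVar_of_lt (m : ℕ) {i : ℤ} (h : (m : ℤ) < i) : cVar m i = 0 := by
  simp only [cVar]; rw [dif_neg (by omega), if_neg (by omega)]

theorem sigmaP_of_neg (m : ℕ) {p : ℤ} (h : p < 0) : sigmaP m p = 0 := if_pos h

theorem sigmaP_natCast (m p : ℕ) : sigmaP m p = (elemToeplitz (cVar m) p).det := rfl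

theorem sigmaP_zero (m : ℕ) : sigmaP m 0 = 1 := Matrix.det_fin_zero

theorem sigmaP_eq_sum (m : ℕ) {p : ℤ} (hp : 0 < p) :
    sigmaP m p = ∑ t : Fin m, (-1) ^ (t : ℕ) * cVar m (1 + t) * sigmaP m (p - 1 - t) := by
  obtain ⟨q, rfl⟩ : ∃ q : ℕ, p = q + 1 := ⟨(p - 1).toNat, by omega⟩
  set f : ℕ → MvPolynomial (Fin m) ℚ := fun t => (-1) ^ t * cVar m (1 + t) * sigmaP m (q - t)
  have hf : ∀ t ≥ min (q + 1) m, f t = 0 := by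
    intro t ht
    rcases min_le_iff.mp ht with ht | ht
    · simp [f, sigmaP_of_neg m (by omega : (q : ℤ) - t < 0)]
    · simp [f, cVar_of_lt m (by omega : (m : ℤ) < 1 + t)]
  calc sigmaP m (q + 1)
      = ∑ j : Fin (q + 1), f j := by
        rw [show (q : ℤ) + 1 = (q + 1 : ℕ) by push_cast; ring, sigmaP_natCast,
          det_elemToeplitz_succ (cVar_zero m) fun i => cVar_of_neg m]
        refine Finset.sum_congr rfl fun j _ => ?_
        rw [← sigmaP_natCast, Nat.cast_sub (by omega)]
    _ = ∑ t ∈ Finset.range (min (q + 1) m), f t :=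
        (Fin.sum_univ_eq_sum_range f _).trans (Finset.eventually_constant_sum hf (min_le_left ..))
    _ = ∑ t : Fin m, f t :=
        ((Fin.sum_univ_eq_sum_range f _).trans
          (Finset.eventually_constant_sum hf (min_le_right ..))).symm
    _ = _ := by simp [f]

noncomputable def jacobiTrudi (m : ℕ) {l : ℕ} (lam : Fin l → ℕ) :
    Matrix (Fin l) (Fin l) (MvPolynomial (Fin m) ℚ) :=
  Matrix.of fun i j => sigmaP m ((lam i : ℤ) + (j : ℤ) - (i : ℤ))

theorem sigmaL_eq_det_jacobiTrudi (m : ℕ) {l : ℕ} (lam : Fin l → ℕ) :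
    sigmaL m lam = (jacobiTrudi m lam).det := rfl

theorem jacobiTrudi_add_one_submatrix (m : ℕ) {l : ℕ} (lam : Fin (l + 1) → ℕ) :
    (jacobiTrudi m fun i => lam i + 1).submatrix Fin.succ Fin.castSucc =
      jacobiTrudi m (Fin.tail lam) := by
  ext i j
  simp only [jacobiTrudi, Matrix.submatrix_apply, Matrix.of_apply, Fin.val_succ, Fin.val_castSucc,
    Fin.tail]
  push_cast
  ring_nf

theorem sigmaL_snoc_zero (m : ℕ) {l : ℕ} (μ : Fin l → ℕ) :
    sigmaL m (Fin.snoc μ 0 : Fin (l + 1) → ℕ) = sigmaL m μ := by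
  rw [sigmaL, Matrix.det_succ_row_of_eq_zero _ (Fin.last l) (Fin.last l) fun j hj =>
    sigmaP_of_neg m (by simp [Fin.val_lt_last hj])]
  simp [sigmaP_zero, ← two_mul, sigmaL, Matrix.submatrix]

theorem cVar_mul_sigmaL {m : ℕ} (hm : 0 < m) (lam : Fin m → ℕ) :
    cVar m m * sigmaL m lam = sigmaL m fun i => lam i + 1 := by
  obtain ⟨n, rfl⟩ : ∃ n, m = n + 1 := ⟨m - 1, by omega⟩
  have hrot := Matrix.det_eq_of_col_rotate (jacobiTrudi (n + 1) lam)
    (jacobiTrudi (n + 1) fun i => lam i + 1)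
    (fun j => (-1) ^ (n - j : ℕ) * cVar (n + 1) (n + 1 - j))
    (fun i j => by
      simp only [jacobiTrudi, Matrix.of_apply, Fin.val_succ, Fin.val_castSucc]
      push_cast
      ring_nf)
    (fun i => by
      rw [jacobiTrudi, Matrix.of_apply, sigmaP_eq_sum _ (by push_cast; omega),
        ← Equiv.sum_comp Fin.revPerm]
      refine Finset.sum_congr rfl fun j _ => ?_
      simp only [Fin.revPerm_apply, Fin.val_rev, jacobiTrudi, Matrix.of_apply]
      rw [show n + 1 - ((j : ℕ) + 1) = n - j by omega]
      congr 2 <;> (push_cast [Nat.cast_sub (Fin.is_le j)]; ring_nf))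
  rw [sigmaL_eq_det_jacobiTrudi, sigmaL_eq_det_jacobiTrudi, hrot]
  rw [← mul_assoc, Fin.val_zero, Nat.sub_zero, ← pow_add, Even.neg_one_pow ⟨n, rfl⟩, one_mul]
  push_cast
  ring_nf

theorem map_sigmaL_add_one_of_head_eq {Q : Type*} [CommRing Q] {n k : ℕ}
    (f : MvPolynomial (Fin (n + 1)) ℚ →+* Q) (q : Q)
    (hmid : ∀ p : ℤ, (k : ℤ) + 1 ≤ p → p ≤ (n + 1 : ℕ) + (k : ℤ) - 1 → f (sigmaP (n + 1) p) = 0)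
    (htop : f (sigmaP (n + 1) ((n + 1 : ℕ) + k)) = -(-1) ^ (n + 1) * q)
    (lam : Fin (n + 1) → ℕ) (hlam : lam 0 = k) :
    f (sigmaL (n + 1) fun i => lam i + 1) = q * f (sigmaL (n + 1) (Fin.tail lam)) := by
  rw [sigmaL_eq_det_jacobiTrudi, sigmaL_eq_det_jacobiTrudi, f.map_det, f.map_det,
    Matrix.det_succ_row_of_eq_zero _ 0 (Fin.last n) fun j hj => ?_]
  · rw [Fin.succAbove_zero, Fin.succAbove_last, RingHom.mapMatrix_apply, Matrix.submatrix_map,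
      jacobiTrudi_add_one_submatrix, RingHom.mapMatrix_apply, Matrix.map_apply]
    simp only [jacobiTrudi, Matrix.of_apply, Fin.val_zero, Fin.val_last, hlam]
    rw [show ((k + 1 : ℕ) : ℤ) + n - (0 : ℕ) = (n + 1 : ℕ) + k by push_cast; ring, htop]
    have hsign : (-1 : Q) ^ (n + n) = 1 := Even.neg_one_pow ⟨n, rfl⟩
    congr 1
    linear_combination q * hsign
  · have hj' := Fin.val_lt_last hj
    simp only [RingHom.mapMatrix_apply, Matrix.map_apply, jacobiTrudi, Matrix.of_apply,
      Fin.val_zero, hlam]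
    exact hmid _ (by push_cast; omega) (by push_cast; omega)

section QuantumRing

variable (m k : ℕ) (α : ℚ)

theorem mk_sigmaP_eq_zero {p : ℤ} (h₁ : (k : ℤ) + 1 ≤ p) (h₂ : p ≤ (m : ℤ) + k - 1) :
    Ideal.Quotient.mk (qhIdeal m k α) (Polynomial.C (sigmaP m p)) = 0 :=
  Ideal.Quotient.eq_zero_iff_mem.mpr (Ideal.subset_span (Or.inl ⟨p, ⟨h₁, h₂⟩, rfl⟩))

theorem mk_sigmaP_add :
    Ideal.Quotient.mk (qhIdeal m k α) (Polynomial.C (sigmaP m (m + k))) =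
      -(-1) ^ m *
        Ideal.Quotient.mk (qhIdeal m k α) (Polynomial.C (MvPolynomial.C α) * Polynomial.X) := by
  have h : Ideal.Quotient.mk (qhIdeal m k α) (Polynomial.C (sigmaP m (m + k)) +
      (-1) ^ m * Polynomial.C (MvPolynomial.C α) * Polynomial.X) = 0 :=
    Ideal.Quotient.eq_zero_iff_mem.mpr (Ideal.subset_span (Or.inr rfl))
  simp only [map_add, map_mul, map_pow, map_neg, map_one] at h ⊢
  linear_combination h

end QuantumRing

theorem mk_sigmaL_add_one_of_head_eq (n k : ℕ) (α : ℚ) (lam : Fin (n + 1) → ℕ)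
    (hlam : lam 0 = k) :
    Ideal.Quotient.mk (qhIdeal (n + 1) k α) (Polynomial.C (sigmaL (n + 1) fun i => lam i + 1)) =
      Ideal.Quotient.mk (qhIdeal (n + 1) k α) (Polynomial.C (MvPolynomial.C α) * Polynomial.X) *
        Ideal.Quotient.mk (qhIdeal (n + 1) k α) (Polynomial.C (sigmaL (n + 1) (Fin.tail lam))) :=
  map_sigmaL_add_one_of_head_eq (Q := _ ⧸ qhIdeal (n + 1) k α)
    ((Ideal.Quotient.mk _).comp Polynomial.C) _
    (fun _ => mk_sigmaP_eq_zero _ _ _) (mk_sigmaP_add _ _ _) lam hlam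

theorem upShift_of_lt {m k : ℕ} (hm : 0 < m) {lam : Fin m → ℕ} (h : lam ⟨0, hm⟩ < k) :
    upShift m k hm lam = fun i => lam i + 1 :=
  if_pos h

theorem upShift_of_not_lt {n k : ℕ} (hm : 0 < n + 1) {lam : Fin (n + 1) → ℕ}
    (h : ¬lam ⟨0, hm⟩ < k) :
    upShift (n + 1) k hm lam = Fin.snoc (Fin.tail lam) 0 := by
  rw [upShift, if_neg h]
  ext i
  cases i using Fin.lastCases with
  | last => simp
  | cast i =>
    rw [Fin.snoc_castSucc]
    exact dif_pos (by simp)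

theorem quantum_pieri_cm_seidel_general (m k : ℕ) (hm : 0 < m) (α : ℚ)
    (lam : Fin m → ℕ)
    (hbound : ∀ i, lam i ≤ k) :
    Ideal.Quotient.mk (qhIdeal m k α)
        (Polynomial.C (cVar m (m : ℤ) * sigmaL m lam)) =
      (Ideal.Quotient.mk (qhIdeal m k α)
          (Polynomial.C (MvPolynomial.C α) * Polynomial.X)) ^
          ((m + (∑ i, lam i) - ∑ i, upShift m k hm lam i) / (m + k)) *
        Ideal.Quotient.mk (qhIdeal m k α)
          (Polynomial.C (sigmaL m (upShift m k hm lam))) ∧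
    (m + (∑ i, lam i) - ∑ i, upShift m k hm lam i) / (m + k) =
      if lam ⟨0, hm⟩ < k then 0 else 1 := by
  rw [cVar_mul_sigmaL hm]
  obtain ⟨n, rfl⟩ : ∃ n, m = n + 1 := ⟨m - 1, by omega⟩
  by_cases h : lam ⟨0, hm⟩ < k
  · have hexp : (n + 1 + ∑ i, lam i - ∑ i, (lam i + 1)) / (n + 1 + k) = 0 := by
      rw [Finset.sum_add_distrib, add_comm]
      simp
    rw [upShift_of_lt hm h, hexp, if_pos h]
    exact ⟨by rw [pow_zero, one_mul], rfl⟩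
  · have hlam : lam 0 = k := le_antisymm (hbound 0) (not_lt.mp h)
    have hexp : (n + 1 + ∑ i, lam i - ∑ i, (Fin.snoc (Fin.tail lam) 0 : Fin (n + 1) → ℕ) i) /
        (n + 1 + k) = 1 := by
      have hsnoc :
          ∑ i, (Fin.snoc (Fin.tail lam) 0 : Fin (n + 1) → ℕ) i = ∑ i : Fin n, lam i.succ := by
        simp [Fin.sum_univ_castSucc, Fin.tail]
      rw [hsnoc, Fin.sum_univ_succ, hlam, ← add_assoc, Nat.add_sub_cancel, Nat.div_self (by omega)]
    rw [upShift_of_not_lt hm h, hexp, if_neg h, pow_one, sigmaL_snoc_zero]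
    exact ⟨mk_sigmaL_add_one_of_head_eq n k α lam hlam, rfl⟩

/-- In `QH_α` one has `c_m σ_λ = (α q)^{(m + |λ| - |λ↑1|)/n} σ_{λ↑1}`, and the
exponent is `0` if `λ_1 < k` and `1` if `λ_1 = k`. -/
theorem quantum_pieri_cm_seidel (m k : ℕ) (hm : 0 < m) (hk : 0 < k) (α : ℚ)
    (lam : Fin m → ℕ)
    (hanti : ∀ i j : Fin m, i ≤ j → lam j ≤ lam i) (hbound : ∀ i, lam i ≤ k) :
    Ideal.Quotient.mk (qhIdeal m k α)
        (Polynomial.C (cVar m (m : ℤ) * sigmaL m lam)) =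
      (Ideal.Quotient.mk (qhIdeal m k α)
          (Polynomial.C (MvPolynomial.C α) * Polynomial.X)) ^
          ((m + (∑ i, lam i) - ∑ i, upShift m k hm lam i) / (m + k)) *
        Ideal.Quotient.mk (qhIdeal m k α)
          (Polynomial.C (sigmaL m (upShift m k hm lam))) ∧
    (m + (∑ i, lam i) - ∑ i, upShift m k hm lam i) / (m + k) =
      if lam ⟨0, hm⟩ < k then 0 else 1 :=
  quantum_pieri_cm_seidel_general m k hm α lam hbound
end

section
/- Let λ, μ ⊆ m×k be partitions and suppose μ is obtained from λ by adding a single box. Then the Seidel orbit weight sums agree: Σ_{p=0}^{n−1} |μ↑p| = Σ_{p=0}^{n−1} |λ↑p|, where n = m+k. -/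
/-!
Adding a box commutes with the Seidel shift as long as the new box is not wrapped around: a
shift moves it one column to the right, or one row up when the full first row is removed. So
`|μ↑p| = |λ↑p| + 1`, except at the one step where the box sits in the top-right corner: there
`λ` gains a full column (`m` boxes) while `μ` loses its full first row (`k` boxes), so
`|λ↑p| = |μ↑p| + (n - 1)`. One shift later the box is back, in the bottom-left corner, and it
takes `n - 2` more shifts to reach the top-right corner again. Hence among `n` consecutive
shifts the exceptional step occurs exactly once, and it cancels the `n - 1` surplus boxes of
the other steps.
-/

/-- Seidel shift of a partition contained in the `m × k` rectangle,
viewed as a weakly decreasing function `ℕ → ℕ` vanishing from index `m` on. -/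
def seidelShift (m k : ℕ) (lam : ℕ → ℕ) : ℕ → ℕ :=
  if lam 0 < k then (fun i => if i < m then lam i + 1 else 0)
  else (fun i => lam (i + 1))

/-- `lam` is a partition contained in the `m × k` rectangle. -/
def IsPartIn (m k : ℕ) (lam : ℕ → ℕ) : Prop :=
  (∀ i j, i ≤ j → lam j ≤ lam i) ∧ lam 0 ≤ k ∧ ∀ i, m ≤ i → lam i = 0

def partWeight (m : ℕ) (lam : ℕ → ℕ) : ℕ := ∑ i ∈ Finset.range m, lam i

section SeidelShift

variable {m k : ℕ} {lam : ℕ → ℕ}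

lemma seidelShift_of_lt (h : lam 0 < k) (i : ℕ) :
    seidelShift m k lam i = if i < m then lam i + 1 else 0 := by
  rw [seidelShift, if_pos h]

lemma seidelShift_of_not_lt (h : ¬ lam 0 < k) (i : ℕ) :
    seidelShift m k lam i = lam (i + 1) := by
  rw [seidelShift, if_neg h]

lemma isPartIn_seidelShift (h : IsPartIn m k lam) : IsPartIn m k (seidelShift m k lam) := by
  obtain ⟨hanti, hle, hzero⟩ := h
  by_cases h0 : lam 0 < k
  · refine ⟨fun i j hij => ?_, ?_, fun i hi => ?_⟩
    · rw [seidelShift_of_lt h0, seidelShift_of_lt h0]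
      have := hanti i j hij
      split_ifs <;> omega
    · rw [seidelShift_of_lt h0]
      split_ifs <;> omega
    · rw [seidelShift_of_lt h0, if_neg (by omega)]
  · refine ⟨fun i j hij => ?_, ?_, fun i hi => ?_⟩
    · simp only [seidelShift_of_not_lt h0]
      exact hanti _ _ (by omega)
    · rw [seidelShift_of_not_lt h0]
      exact (hanti 0 1 zero_le_one).trans hle
    · rw [seidelShift_of_not_lt h0]
      exact hzero _ (by omega)

lemma partWeight_seidelShift_of_lt (h : lam 0 < k) :
    partWeight m (seidelShift m k lam) = partWeight m lam + m := by
  rw [partWeight, Finset.sum_congr rfl fun i hi => by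
    rw [seidelShift_of_lt h, if_pos (Finset.mem_range.mp hi)]]
  simp [partWeight, Finset.sum_add_distrib]

lemma IsPartIn.partWeight_seidelShift_of_not_lt (hlam : IsPartIn m k lam) (h : ¬ lam 0 < k) :
    partWeight m (seidelShift m k lam) + lam 0 = partWeight m lam := by
  simp only [partWeight, seidelShift_of_not_lt h]
  rw [← Finset.sum_range_succ' lam m, Finset.sum_range_succ, hlam.2.2 m le_rfl, add_zero]

end SeidelShift

/-- `mu` is `lam` with one box added in row `r`, and `s` is the number of Seidel shifts
after which this box reaches the top-right corner `(0, k - 1)`. -/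
def AddsBox (m k s : ℕ) (lam mu : ℕ → ℕ) : Prop :=
  IsPartIn m k lam ∧ IsPartIn m k mu ∧
    ∃ r < m, (∀ i, i ≠ r → mu i = lam i) ∧ mu r = lam r + 1 ∧ s + lam r + 1 = r + k

namespace AddsBox

variable {m k s : ℕ} {lam mu : ℕ → ℕ}

lemma counter_add_two_le (h : AddsBox m k s lam mu) : s + 2 ≤ m + k := by
  obtain ⟨-, -, r, hr, -, -, hs⟩ := h
  omega

lemma partWeight_eq (h : AddsBox m k s lam mu) : partWeight m mu = partWeight m lam + 1 := by
  obtain ⟨-, -, r, hr, hne, hrow, -⟩ := h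
  have hmu : ∀ i ∈ Finset.range m, mu i = lam i + if i = r then 1 else 0 := fun i _ => by
    by_cases hi : i = r
    · simp [hi, hrow]
    · simp [hi, hne i hi]
  rw [partWeight, Finset.sum_congr rfl hmu, Finset.sum_add_distrib, Finset.sum_ite_eq',
    if_pos (Finset.mem_range.mpr hr), partWeight]

lemma seidelShift_of_succ (h : AddsBox m k (s + 1) lam mu) :
    AddsBox m k s (seidelShift m k lam) (seidelShift m k mu) := by
  obtain ⟨hlam, hmu, r, hr, hne, hrow, hs⟩ := h
  refine ⟨isPartIn_seidelShift hlam, isPartIn_seidelShift hmu, ?_⟩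
  by_cases h0 : lam 0 < k
  · have hmu0 : mu 0 < k := by
      rcases eq_or_ne r 0 with rfl | hr0
      · omega
      · rwa [hne 0 hr0.symm]
    refine ⟨r, hr, fun i hi => ?_, ?_, ?_⟩
    · rw [seidelShift_of_lt h0, seidelShift_of_lt hmu0, hne i hi]
    · rw [seidelShift_of_lt h0, seidelShift_of_lt hmu0, if_pos hr, if_pos hr, hrow]
    · rw [seidelShift_of_lt h0, if_pos hr]
      omega
  · have hr0 : r ≠ 0 := by
      rintro rfl
      have := hmu.2.1
      omega
    have hmu0 : ¬ mu 0 < k := by rwa [hne 0 hr0.symm]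
    refine ⟨r - 1, by omega, fun i hi => ?_, ?_, ?_⟩ <;>
      simp only [seidelShift_of_not_lt h0, seidelShift_of_not_lt hmu0, Nat.sub_add_cancel
        (Nat.pos_of_ne_zero hr0)]
    · exact hne _ (by omega)
    · exact hrow
    · omega

lemma iterate (p : ℕ) (h : AddsBox m k (s + p) lam mu) :
    AddsBox m k s ((seidelShift m k)^[p] lam) ((seidelShift m k)^[p] mu) := by
  induction p generalizing lam mu with
  | zero => exact h
  | succ p ih =>
    rw [Function.iterate_succ_apply, Function.iterate_succ_apply]
    exact ih (seidelShift_of_succ (by rwa [← add_assoc] at h))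

lemma partWeight_iterate_of_le {p : ℕ} (h : AddsBox m k s lam mu) (hp : p ≤ s) :
    partWeight m ((seidelShift m k)^[p] mu) = partWeight m ((seidelShift m k)^[p] lam) + 1 :=
  (iterate (s := s - p) p (by rwa [Nat.sub_add_cancel hp])).partWeight_eq

lemma iterate_counter (h : AddsBox m k s lam mu) :
    AddsBox m k 0 ((seidelShift m k)^[s] lam) ((seidelShift m k)^[s] mu) :=
  iterate s (by rwa [zero_add])

lemma corner (h : AddsBox m k 0 lam mu) :
    lam 0 + 1 = k ∧ mu 0 = k ∧ ∀ i, i ≠ 0 → mu i = lam i := by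
  obtain ⟨-, hmu, r, -, hne, hrow, hs⟩ := h
  have := hmu.1 0 r r.zero_le
  have := hmu.2.1
  obtain rfl : r = 0 := by omega
  exact ⟨by omega, by omega, hne⟩

lemma partWeight_seidelShift_of_zero (h : AddsBox m k 0 lam mu) :
    partWeight m (seidelShift m k lam) = partWeight m (seidelShift m k mu) + (m + k - 1) := by
  obtain ⟨hlam0, hmu0, -⟩ := h.corner
  have := partWeight_seidelShift_of_lt (m := m) (show lam 0 < k by omega)
  have := h.2.1.partWeight_seidelShift_of_not_lt (show ¬ mu 0 < k by omega)
  have := h.partWeight_eq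
  omega

lemma seidelShift_seidelShift_of_zero (h : AddsBox m k 0 lam mu) :
    AddsBox m k (m + k - 2) (seidelShift m k (seidelShift m k lam))
      (seidelShift m k (seidelShift m k mu)) := by
  obtain ⟨hlam0, hmu0, hne⟩ := h.corner
  obtain ⟨hlam, hmu, r, hr, -⟩ := h
  have hl0 : lam 0 < k := by omega
  have hm0 : ¬ mu 0 < k := by omega
  have hsl0 : ¬ seidelShift m k lam 0 < k := by
    rw [seidelShift_of_lt hl0, if_pos (by omega)]
    omega
  have hsm0 : seidelShift m k mu 0 < k := by
    rw [seidelShift_of_not_lt hm0, hne 1 one_ne_zero]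
    exact (hlam.1 0 1 zero_le_one).trans_lt hl0
  refine ⟨isPartIn_seidelShift (isPartIn_seidelShift hlam),
      isPartIn_seidelShift (isPartIn_seidelShift hmu), m - 1, by omega,
      fun i hi => ?_, ?_, ?_⟩ <;>
    simp only [seidelShift_of_not_lt hsl0, seidelShift_of_lt hsm0, seidelShift_of_lt hl0,
      seidelShift_of_not_lt hm0]
  · rw [hne (i + 1) (by omega)]
    split_ifs <;> omega
  · rw [if_pos (by omega), if_neg (by omega), hmu.2.2 _ (by omega)]
  · rw [if_neg (by omega)]
    omega

lemma partWeight_iterate_succ (h : AddsBox m k s lam mu) :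
    partWeight m ((seidelShift m k)^[s + 1] lam)
      = partWeight m ((seidelShift m k)^[s + 1] mu) + (m + k - 1) := by
  simp only [Function.iterate_succ_apply']
  exact h.iterate_counter.partWeight_seidelShift_of_zero

lemma partWeight_iterate_of_ne {p : ℕ} (h : AddsBox m k s lam mu) (hp : p < m + k)
    (hps : p ≠ s + 1) :
    partWeight m ((seidelShift m k)^[p] mu) = partWeight m ((seidelShift m k)^[p] lam) + 1 := by
  rcases le_or_gt p s with hle | hgt
  · exact h.partWeight_iterate_of_le hle
  · have hback : AddsBox m k (m + k - 2) ((seidelShift m k)^[s + 2] lam)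
        ((seidelShift m k)^[s + 2] mu) := by
      simp only [Function.iterate_succ_apply']
      exact h.iterate_counter.seidelShift_seidelShift_of_zero
    have := hback.partWeight_iterate_of_le (p := p - (s + 2)) (by omega)
    rwa [← Function.iterate_add_apply, ← Function.iterate_add_apply,
      Nat.sub_add_cancel (by omega)] at this

end AddsBox

lemma IsPartIn.exists_addsBox {m k : ℕ} {lam mu : ℕ → ℕ} (hlam : IsPartIn m k lam)
    (hmu : IsPartIn m k mu) (hsub : ∀ i, lam i ≤ mu i)
    (hbox : partWeight m mu = partWeight m lam + 1) : ∃ s, AddsBox m k s lam mu := by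
  obtain ⟨r, hr, hlt⟩ := Finset.exists_lt_of_sum_lt (s := Finset.range m)
    (show partWeight m lam < partWeight m mu by omega)
  have hr' := Finset.mem_range.mp hr
  set nu : ℕ → ℕ := fun i => lam i + if i = r then 1 else 0
  have hnu_le : ∀ i ∈ Finset.range m, nu i ≤ mu i := fun i _ => by
    have := hsub i
    by_cases hi : i = r <;> simp only [nu, hi, if_true, if_false] <;> omega
  have hnu_sum : ∑ i ∈ Finset.range m, nu i = ∑ i ∈ Finset.range m, mu i := by
    rw [Finset.sum_add_distrib, Finset.sum_ite_eq', if_pos hr]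
    exact hbox.symm
  have hnu := (Finset.sum_eq_sum_iff_of_le hnu_le).mp hnu_sum
  have hne : ∀ i, i ≠ r → mu i = lam i := fun i hi => by
    by_cases him : i < m
    · simpa [nu, hi] using (hnu i (Finset.mem_range.mpr him)).symm
    · rw [hlam.2.2 i (by omega), hmu.2.2 i (by omega)]
  have hrow : mu r = lam r + 1 := by simpa [nu] using (hnu r hr).symm
  have := (hmu.1 0 r r.zero_le).trans hmu.2.1
  exact ⟨r + k - (lam r + 1), hlam, hmu, r, hr', hne, hrow, by omega⟩

theorem seidel_orbit_sum_add_box_general (m k : ℕ)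
    (lam mu : ℕ → ℕ) (hlam : IsPartIn m k lam) (hmu : IsPartIn m k mu)
    (hsub : ∀ i, lam i ≤ mu i)
    (hbox : ∑ i ∈ Finset.range m, mu i = (∑ i ∈ Finset.range m, lam i) + 1) :
    ∑ p ∈ Finset.range (m + k), ∑ i ∈ Finset.range m, (seidelShift m k)^[p] mu i
      = ∑ p ∈ Finset.range (m + k), ∑ i ∈ Finset.range m, (seidelShift m k)^[p] lam i := by
  change ∑ p ∈ Finset.range (m + k), partWeight m ((seidelShift m k)^[p] mu)
    = ∑ p ∈ Finset.range (m + k), partWeight m ((seidelShift m k)^[p] lam)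
  obtain ⟨s, h⟩ := hlam.exists_addsBox hmu hsub hbox
  have hs : s + 1 ∈ Finset.range (m + k) :=
    Finset.mem_range.mpr (by have := h.counter_add_two_le; omega)
  have hrest :
      ∑ p ∈ (Finset.range (m + k)).erase (s + 1), partWeight m ((seidelShift m k)^[p] mu)
        = ∑ p ∈ (Finset.range (m + k)).erase (s + 1), partWeight m ((seidelShift m k)^[p] lam)
          + (m + k - 1) := by
    rw [Finset.sum_congr rfl fun p hp => h.partWeight_iterate_of_ne
        (Finset.mem_range.mp (Finset.mem_of_mem_erase hp)) (Finset.ne_of_mem_erase hp),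
      Finset.sum_add_distrib, Finset.sum_const, Finset.card_erase_of_mem hs, Finset.card_range,
      smul_eq_mul, mul_one]
  rw [← Finset.add_sum_erase _ _ hs, ← Finset.add_sum_erase _ _ hs, hrest,
    h.partWeight_iterate_succ]
  omega

/-- If `μ ⊆ m × k` is obtained from `λ ⊆ m × k` by adding a single box, then
the Seidel orbit weight sums of `λ` and `μ` agree. -/
theorem seidel_orbit_sum_add_box (m k : ℕ) (hm : 0 < m) (hk : 0 < k)
    (lam mu : ℕ → ℕ) (hlam : IsPartIn m k lam) (hmu : IsPartIn m k mu)
    (hsub : ∀ i, lam i ≤ mu i)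
    (hbox : ∑ i ∈ Finset.range m, mu i = (∑ i ∈ Finset.range m, lam i) + 1) :
    ∑ p ∈ Finset.range (m + k), ∑ i ∈ Finset.range m, (seidelShift m k)^[p] mu i
      = ∑ p ∈ Finset.range (m + k), ∑ i ∈ Finset.range m, (seidelShift m k)^[p] lam i :=
  seidel_orbit_sum_add_box_general m k lam mu hlam hmu hsub hbox
end
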